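/- Given any TEHS (Σ, S, R, {R^D_A}_A, {R^C_A}_A, H), the derived structure M' = (Σ, S, R, {R'^D_A}_A, {R'^C_A}_A, L) is a pseudo-TEM; moreover, R^D_A ⊆ R'^D_A and R^C_A ⊆ R'^C_A hold for every coalition A. If the given TEHS is synchronous, then so is M'. -/

import Mathlib

namespace CMATEL

/-- A coalition is a nonempty set of agents. -/
def Coalition (Agt : Type) : Type := {A : Set Agt // A.Nonempty}

/-- The singleton coalition `{a}`. -/
def single {Agt : Type} (a : Agt) : Coalition Agt := ⟨{a}, Set.singleton_nonempty a⟩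

/-- Formulas of the language L. -/
inductive Formula (Agt AP : Type) : Type where
  | atom : AP → Formula Agt AP
  | neg  : Formula Agt AP → Formula Agt AP
  | and  : Formula Agt AP → Formula Agt AP → Formula Agt AP
  | next : Formula Agt AP → Formula Agt AP
  | untl : Formula Agt AP → Formula Agt AP → Formula Agt AP
  | dk   : Coalition Agt → Formula Agt AP → Formula Agt AP
  | ck   : Coalition Agt → Formula Agt AP → Formula Agt AP

variable {Agt AP : Type}

def Formula.imp (φ ψ : Formula Agt AP) : Formula Agt AP :=
  Formula.neg (Formula.and φ (Formula.neg ψ))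
def Formula.or (φ ψ : Formula Agt AP) : Formula Agt AP :=
  Formula.neg (Formula.and (Formula.neg φ) (Formula.neg ψ))
def Formula.iff (φ ψ : Formula Agt AP) : Formula Agt AP :=
  Formula.and (φ.imp ψ) (ψ.imp φ)

/-- The set of subformulas of a formula. -/
def Formula.subf : Formula Agt AP → Set (Formula Agt AP)
  | .atom p   => {Formula.atom p}
  | .neg φ    => insert (Formula.neg φ) φ.subf
  | .and φ ψ  => insert (Formula.and φ ψ) (φ.subf ∪ ψ.subf)
  | .next φ   => insert (Formula.next φ) φ.subf
  | .untl φ ψ => insert (Formula.untl φ ψ) (φ.subf ∪ ψ.subf)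
  | .dk A φ   => insert (Formula.dk A φ) φ.subf
  | .ck A φ   => insert (Formula.ck A φ) φ.subf

/-- A temporal-epistemic system (TES): a nonempty set of states, a nonempty set
of runs, and, for every coalition `A`, relations `R^D_A` and `R^C_A` on points,
where `R^C_A` is the reflexive transitive closure of the union of `R^D_{A'}`
over coalitions `A' ⊆ A`. -/
structure TES (Agt : Type) where
  State : Type
  stateNE : Nonempty State
  runs : Set (ℕ → State)
  runsNE : runs.Nonempty
  RD : Coalition Agt → ↥runs × ℕ → ↥runs × ℕ → Prop
  RC : Coalition Agt → ↥runs × ℕ → ↥runs × ℕ → Prop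
  hRC : ∀ A : Coalition Agt, RC A =
    Relation.ReflTransGen (fun x y => ∃ A' : Coalition Agt, A'.1 ⊆ A.1 ∧ RD A' x y)

abbrev TES.Point (G : TES Agt) : Type := ↥G.runs × ℕ

/-- Synchrony: epistemically related points have the same time component. -/
def TES.Synchronous (G : TES Agt) : Prop :=
  ∀ (A : Coalition Agt) (x y : G.Point), G.RD A x y → x.2 = y.2

/-- A TEF: each `R^D_A` is an equivalence, and `R^D_A = ⋂_{a ∈ A} R^D_{{a}}`. -/
def IsTEF (G : TES Agt) : Prop :=
  (∀ A : Coalition Agt, Equivalence (G.RD A)) ∧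
  (∀ (A : Coalition Agt) (x y : G.Point), G.RD A x y ↔ ∀ a ∈ A.1, G.RD (single a) x y)

/-- A pseudo-TEF: each `R^D_A` is an equivalence, and `R^D_A ⊆ R^D_B` for `B ⊆ A`. -/
def IsPseudoTEF (G : TES Agt) : Prop :=
  (∀ A : Coalition Agt, Equivalence (G.RD A)) ∧
  (∀ (A B : Coalition Agt), B.1 ⊆ A.1 → ∀ x y : G.Point, G.RD A x y → G.RD B x y)

/-- Satisfaction at points `R × ℕ`, given the epistemic relations and a labeling. -/
def Sat {R : Type} (RD RC : Coalition Agt → R × ℕ → R × ℕ → Prop)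
    (lab : R × ℕ → Set AP) : R × ℕ → Formula Agt AP → Prop
  | x, .atom p => p ∈ lab x
  | x, .neg φ => ¬ Sat RD RC lab x φ
  | x, .and φ ψ => Sat RD RC lab x φ ∧ Sat RD RC lab x ψ
  | x, .next φ => Sat RD RC lab (x.1, x.2 + 1) φ
  | x, .untl φ ψ => ∃ i, x.2 ≤ i ∧ Sat RD RC lab (x.1, i) ψ ∧
      ∀ j, x.2 ≤ j → j < i → Sat RD RC lab (x.1, j) φ
  | x, .dk A φ => ∀ y, RD A x y → Sat RD RC lab y φ
  | x, .ck A φ => ∀ y, RC A x y → Sat RD RC lab y φ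

/-- A temporal-epistemic model: a TEF together with a labeling of points. -/
structure TEM (Agt AP : Type) where
  G : TES Agt
  lab : G.Point → Set AP
  isTEF : IsTEF G

def TEM.sat (M : TEM Agt AP) : M.G.Point → Formula Agt AP → Prop :=
  Sat M.G.RD M.G.RC M.lab

/-- A pseudo temporal-epistemic model: a pseudo-TEF together with a labeling. -/
structure PseudoTEM (Agt AP : Type) where
  G : TES Agt
  lab : G.Point → Set AP
  isPTEF : IsPseudoTEF G

def PseudoTEM.sat (M : PseudoTEM Agt AP) : M.G.Point → Formula Agt AP → Prop :=
  Sat M.G.RD M.G.RC M.lab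

/-- `A`-reachability: the reflexive transitive closure of single-agent steps
`R^D_{{a}}`, `a ∈ A`. -/
def AReach (G : TES Agt) (A : Coalition Agt) : G.Point → G.Point → Prop :=
  Relation.ReflTransGen (fun x y => ∃ a ∈ A.1, G.RD (single a) x y)

/-- Fully expanded sets of formulas. -/
def FullyExpanded (Δ : Set (Formula Agt AP)) : Prop :=
  (∀ φ : Formula Agt AP, Formula.neg (Formula.neg φ) ∈ Δ → φ ∈ Δ) ∧
  (∀ φ ψ : Formula Agt AP, Formula.and φ ψ ∈ Δ → φ ∈ Δ ∧ ψ ∈ Δ) ∧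
  (∀ φ ψ : Formula Agt AP, Formula.neg (Formula.and φ ψ) ∈ Δ →
      Formula.neg φ ∈ Δ ∨ Formula.neg ψ ∈ Δ) ∧
  (∀ φ : Formula Agt AP, Formula.neg (Formula.next φ) ∈ Δ →
      Formula.next (Formula.neg φ) ∈ Δ) ∧
  (∀ φ ψ : Formula Agt AP, Formula.untl φ ψ ∈ Δ →
      ψ ∈ Δ ∨ (φ ∈ Δ ∧ Formula.next (Formula.untl φ ψ) ∈ Δ)) ∧
  (∀ φ ψ : Formula Agt AP, Formula.neg (Formula.untl φ ψ) ∈ Δ →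
      (Formula.neg ψ ∈ Δ ∧ Formula.neg φ ∈ Δ) ∨
      (Formula.neg ψ ∈ Δ ∧ Formula.neg (Formula.next (Formula.untl φ ψ)) ∈ Δ)) ∧
  (∀ (A A' : Coalition Agt) (φ : Formula Agt AP), Formula.dk A φ ∈ Δ →
      A.1 ⊆ A'.1 → Formula.dk A' φ ∈ Δ) ∧
  (∀ (A : Coalition Agt) (φ : Formula Agt AP), Formula.dk A φ ∈ Δ → φ ∈ Δ) ∧
  (∀ (A : Coalition Agt) (φ : Formula Agt AP), Formula.ck A φ ∈ Δ →
      ∀ a ∈ A.1, Formula.dk (single a) (Formula.and φ (Formula.ck A φ)) ∈ Δ) ∧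
  (∀ (A : Coalition Agt) (φ : Formula Agt AP), Formula.neg (Formula.ck A φ) ∈ Δ →
      ∃ a ∈ A.1, Formula.neg (Formula.dk (single a) (Formula.and φ (Formula.ck A φ))) ∈ Δ) ∧
  (∀ ψ ∈ Δ, ∀ (A : Coalition Agt) (φ : Formula Agt AP),
      Formula.dk A φ ∈ ψ.subf → Formula.dk A φ ∈ Δ ∨ Formula.neg (Formula.dk A φ) ∈ Δ)

/-- Hintikka-structure conditions (H1)–(H7) for a labeling `H` on a TES. -/
def IsHintikka (G : TES Agt) (H : G.Point → Set (Formula Agt AP)) : Prop :=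
  (∀ (x : G.Point) (φ : Formula Agt AP), Formula.neg φ ∈ H x → φ ∉ H x) ∧
  (∀ x : G.Point, FullyExpanded (H x)) ∧
  (∀ (r : ↥G.runs) (n : ℕ) (φ : Formula Agt AP),
      Formula.next φ ∈ H (r, n) → φ ∈ H (r, n + 1)) ∧
  (∀ (r : ↥G.runs) (n : ℕ) (φ ψ : Formula Agt AP), Formula.untl φ ψ ∈ H (r, n) →
      ∃ i, n ≤ i ∧ ψ ∈ H (r, i) ∧ ∀ j, n ≤ j → j < i → φ ∈ H (r, j)) ∧
  (∀ (x : G.Point) (A : Coalition Agt) (φ : Formula Agt AP),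
      Formula.neg (Formula.dk A φ) ∈ H x →
      ∃ y : G.Point, G.RD A x y ∧ Formula.neg φ ∈ H y) ∧
  (∀ (x y : G.Point) (A : Coalition Agt), G.RD A x y →
      ∀ (A' : Coalition Agt), A'.1 ⊆ A.1 → ∀ φ : Formula Agt AP,
        (Formula.dk A' φ ∈ H x ↔ Formula.dk A' φ ∈ H y)) ∧
  (∀ (x : G.Point) (A : Coalition Agt) (φ : Formula Agt AP),
      Formula.neg (Formula.ck A φ) ∈ H x →
      ∃ y : G.Point, G.RC A x y ∧ Formula.neg φ ∈ H y)

/-- A temporal-epistemic Hintikka structure. -/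
structure TEHS (Agt AP : Type) where
  G : TES Agt
  H : G.Point → Set (Formula Agt AP)
  isH : IsHintikka G H

def TEHS.Synchronous (Hs : TEHS Agt AP) : Prop := Hs.G.Synchronous

/-- Derived relation `R'^D_A`: the reflexive, symmetric and transitive closure of
the union of `R^D_B` over coalitions `B ⊇ A`. -/
def derivedRD (G : TES Agt) (A : Coalition Agt) : G.Point → G.Point → Prop :=
  Relation.EqvGen (fun x y => ∃ B : Coalition Agt, A.1 ⊆ B.1 ∧ G.RD B x y)

/-- Derived relation `R'^C_A`: the transitive closure of the union of
`R'^D_{{a}}` over `a ∈ A`. -/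
def derivedRC (G : TES Agt) (A : Coalition Agt) : G.Point → G.Point → Prop :=
  Relation.TransGen (fun x y => ∃ a ∈ A.1, derivedRD G (single a) x y)

/-- Derived labeling `L(r,n) = H(r,n) ∩ AP`. -/
def derivedLab (Hs : TEHS Agt AP) : Hs.G.Point → Set AP :=
  fun x => {p | Formula.atom p ∈ Hs.H x}

/-- Patently inconsistent set: contains a formula together with its negation. -/
def PatentlyInconsistent (Δ : Set (Formula Agt AP)) : Prop :=
  ∃ φ : Formula Agt AP, φ ∈ Δ ∧ Formula.neg φ ∈ Δ

/-- Minimal fully expanded extension. -/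
def MinimalFEE (Γ Δ : Set (Formula Agt AP)) : Prop :=
  FullyExpanded Δ ∧ Γ ⊆ Δ ∧
  ¬ ∃ Δ' : Set (Formula Agt AP), FullyExpanded Δ' ∧ Γ ⊆ Δ' ∧ Δ' ⊂ Δ

/-- A maximal path from `x` to `y`: consecutive points are related by `R^D_{A_i}`
and by no `R^D_B` for a strictly larger coalition `B`. -/
def IsMaximalPath (G : TES Agt) (m : ℕ) (pts : ℕ → G.Point) (cs : ℕ → Coalition Agt)
    (x y : G.Point) : Prop :=
  pts 0 = x ∧ pts m = y ∧ ∀ i < m,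
    G.RD (cs i) (pts i) (pts (i + 1)) ∧
    ∀ B : Coalition Agt, (cs i).1 ⊂ B.1 → ¬ G.RD B (pts i) (pts (i + 1))

/-- A maximal path equals its reduction iff no two consecutive points lie on the
same run and no two consecutive coalition labels coincide. -/
def IsReducedPath (G : TES Agt) (m : ℕ) (pts : ℕ → G.Point) (cs : ℕ → Coalition Agt) : Prop :=
  (∀ i < m, (pts i).1 ≠ (pts (i + 1)).1) ∧ (∀ i, i + 1 < m → cs i ≠ cs (i + 1))

/-- Forest-likeness: between any two points there is at most one reduced maximal path. -/
def ForestLike (G : TES Agt) : Prop :=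
  ∀ (x y : G.Point) (m₁ : ℕ) (pts₁ : ℕ → G.Point) (cs₁ : ℕ → Coalition Agt)
    (m₂ : ℕ) (pts₂ : ℕ → G.Point) (cs₂ : ℕ → Coalition Agt),
    IsMaximalPath G m₁ pts₁ cs₁ x y → IsReducedPath G m₁ pts₁ cs₁ →
    IsMaximalPath G m₂ pts₂ cs₂ x y → IsReducedPath G m₂ pts₂ cs₂ →
    m₁ = m₂ ∧ (∀ i ≤ m₁, pts₁ i = pts₂ i) ∧ (∀ i < m₁, cs₁ i = cs₂ i)

/-- Finite conjunction of a nonempty list of formulas. -/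
def bigAnd : Formula Agt AP → List (Formula Agt AP) → Formula Agt AP
  | φ, [] => φ
  | φ, ψ :: l => Formula.and φ (bigAnd ψ l)

/-- `D_{{a}}(φ ∧ C_A φ)`. -/
def dform (A : Coalition Agt) (φ : Formula Agt AP) (a : Agt) : Formula Agt AP :=
  Formula.dk (single a) (Formula.and φ (Formula.ck A φ))

theorem derivedRD_anti (G : TES Agt) {A B : Coalition Agt} (hBA : B.1 ⊆ A.1)
    {x y : G.Point} (h : derivedRD G A x y) : derivedRD G B x y :=
  Relation.EqvGen.mono (fun _ _ ⟨C, hAC, hC⟩ => ⟨C, hBA.trans hAC, hC⟩) _ _ h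

theorem derivedRD_of_RD (G : TES Agt) {A : Coalition Agt} {x y : G.Point}
    (h : G.RD A x y) : derivedRD G A x y :=
  Relation.EqvGen.rel _ _ ⟨A, subset_rfl, h⟩

theorem derivedRD_equivalence (G : TES Agt) (A : Coalition Agt) :
    Equivalence (derivedRD G A) :=
  Relation.EqvGen.is_equivalence _

theorem derivedRD_snd_eq_of_synchronous (G : TES Agt) (hG : G.Synchronous) {A : Coalition Agt}
    {x y : G.Point} (h : derivedRD G A x y) : x.2 = y.2 := by
  induction h with
  | rel _ _ hxy => obtain ⟨B, -, hB⟩ := hxy; exact hG B _ _ hB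
  | refl => rfl
  | symm _ _ _ ih => exact ih.symm
  | trans _ _ _ _ _ ih₁ ih₂ => exact ih₁.trans ih₂

/-- Reflexivity of the transitive closure `R'^C_A` comes from `A` being nonempty. -/
theorem derivedRC_refl (G : TES Agt) (A : Coalition Agt) (x : G.Point) :
    derivedRC G A x x :=
  let ⟨a, ha⟩ := A.2
  Relation.TransGen.single ⟨a, ha, Relation.EqvGen.refl x⟩

theorem derivedRC_of_reflTransGen (G : TES Agt) {A : Coalition Agt} {x y : G.Point}
    (h : Relation.ReflTransGen
      (fun x y => ∃ A' : Coalition Agt, A'.1 ⊆ A.1 ∧ derivedRD G A' x y) x y) :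
    derivedRC G A x y := by
  induction h with
  | refl => exact derivedRC_refl G A x
  | tail _ hstep ih =>
    obtain ⟨A', hA'A, hA'⟩ := hstep
    obtain ⟨a, ha⟩ := A'.2
    exact ih.tail ⟨a, hA'A ha, derivedRD_anti G (Set.singleton_subset_iff.mpr ha) hA'⟩

theorem derivedRC_eq_reflTransGen (G : TES Agt) (A : Coalition Agt) :
    derivedRC G A = Relation.ReflTransGen
      (fun x y => ∃ A' : Coalition Agt, A'.1 ⊆ A.1 ∧ derivedRD G A' x y) := by
  funext x y
  refine propext ⟨fun h => ?_, derivedRC_of_reflTransGen G⟩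
  refine Relation.ReflTransGen.mono ?_ _ _ h.to_reflTransGen
  rintro _ _ ⟨a, ha, hstep⟩
  exact ⟨single a, Set.singleton_subset_iff.mpr ha, hstep⟩

theorem derivedRC_of_RC (G : TES Agt) {A : Coalition Agt} {x y : G.Point}
    (h : G.RC A x y) : derivedRC G A x y := by
  rw [G.hRC] at h
  refine derivedRC_of_reflTransGen G (Relation.ReflTransGen.mono ?_ _ _ h)
  rintro _ _ ⟨A', hA'A, hA'⟩
  exact ⟨A', hA'A, derivedRD_of_RD G hA'⟩

theorem statement_6_general {Agt AP : Type} (Hs : TEHS Agt AP) :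
    (∀ A : Coalition Agt, derivedRC Hs.G A =
        Relation.ReflTransGen
          (fun x y => ∃ A' : Coalition Agt, A'.1 ⊆ A.1 ∧ derivedRD Hs.G A' x y)) ∧
    (∀ A : Coalition Agt, Equivalence (derivedRD Hs.G A)) ∧
    (∀ A B : Coalition Agt, B.1 ⊆ A.1 →
        ∀ x y : Hs.G.Point, derivedRD Hs.G A x y → derivedRD Hs.G B x y) ∧
    (∀ (A : Coalition Agt) (x y : Hs.G.Point), Hs.G.RD A x y → derivedRD Hs.G A x y) ∧
    (∀ (A : Coalition Agt) (x y : Hs.G.Point), Hs.G.RC A x y → derivedRC Hs.G A x y) ∧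
    (Hs.G.Synchronous →
        ∀ (A : Coalition Agt) (x y : Hs.G.Point), derivedRD Hs.G A x y → x.2 = y.2) :=
  ⟨derivedRC_eq_reflTransGen Hs.G,
    derivedRD_equivalence Hs.G,
    fun _ _ hBA _ _ => derivedRD_anti Hs.G hBA,
    fun _ _ _ => derivedRD_of_RD Hs.G,
    fun _ _ _ => derivedRC_of_RC Hs.G,
    fun hsync _ _ _ => derivedRD_snd_eq_of_synchronous Hs.G hsync⟩

/-- The structure derived from a TEHS (with `R'^D_A` the reflexive,
symmetric, transitive closure of `⋃_{A ⊆ B} R^D_B`, `R'^C_A` the transitive closure of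
`⋃_{a ∈ A} R'^D_{{a}}`, and labeling `L = H ∩ AP`) is a pseudo-TEM: it satisfies the TES
condition on `R'^C_A`, each `R'^D_A` is an equivalence and the family is antitone;
moreover `R^D_A ⊆ R'^D_A` and `R^C_A ⊆ R'^C_A`; and synchrony is preserved. -/
theorem statement_6 {Agt AP : Type} [Fintype Agt] [Nonempty Agt] (Hs : TEHS Agt AP) :
    (∀ A : Coalition Agt, derivedRC Hs.G A =
        Relation.ReflTransGen
          (fun x y => ∃ A' : Coalition Agt, A'.1 ⊆ A.1 ∧ derivedRD Hs.G A' x y)) ∧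
    (∀ A : Coalition Agt, Equivalence (derivedRD Hs.G A)) ∧
    (∀ A B : Coalition Agt, B.1 ⊆ A.1 →
        ∀ x y : Hs.G.Point, derivedRD Hs.G A x y → derivedRD Hs.G B x y) ∧
    (∀ (A : Coalition Agt) (x y : Hs.G.Point), Hs.G.RD A x y → derivedRD Hs.G A x y) ∧
    (∀ (A : Coalition Agt) (x y : Hs.G.Point), Hs.G.RC A x y → derivedRC Hs.G A x y) ∧
    (Hs.G.Synchronous →
        ∀ (A : Coalition Agt) (x y : Hs.G.Point), derivedRD Hs.G A x y → x.2 = y.2) :=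
  statement_6_general Hs

end CMATEL
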